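/- arXiv:1206.1768 — 11 statements merged into one kernel-verified Lean document; each statement's English description precedes it below -/
import Mathlib

section
/- Let U be an open subset of ℝ³ and let e₁, e₂, e₃ be smooth vector fields on U that are linearly independent at every point of U. Suppose there are smooth functions f₁, f₂, k₁, k₂, σ on U such that [e₁,e₃] = k₁·e₃, [e₂,e₃] = k₂·e₃ and [e₁,e₂] = f₁·e₁ + f₂·e₂ − 2σ·e₃. Then e₃(f₁) = 0 and e₃(f₂) = 0 on U, and moreover 2·e₃(σ) + k₁·f₁ + k₂·f₂ + e₂(k₁) − e₁(k₂) = 0 on U. -/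
/-- The Lie bracket of two vector fields on (an open subset of) `ℝⁿ`,
viewed as smooth maps `ℝⁿ → ℝⁿ`: `[X,Y](p) = DY(p)[X(p)] − DX(p)[Y(p)]`. -/
noncomputable def lieBracketVF {n : ℕ} (X Y : (Fin n → ℝ) → (Fin n → ℝ)) :
    (Fin n → ℝ) → (Fin n → ℝ) :=
  fun p => fderiv ℝ Y p (X p) - fderiv ℝ X p (Y p)

/-- The directional derivative `X(g)` of a function `g` along a vector field `X`:
`X(g)(p) = dg_p(X(p))`. -/
noncomputable def dirDeriv {n : ℕ} (X : (Fin n → ℝ) → (Fin n → ℝ))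
    (g : (Fin n → ℝ) → ℝ) : (Fin n → ℝ) → ℝ :=
  fun p => fderiv ℝ g p (X p)

lemma lieBracketVF_eq {n : ℕ} (X Y : (Fin n → ℝ) → (Fin n → ℝ)) :
    lieBracketVF X Y = VectorField.lieBracket ℝ X Y := rfl

/-- Leibniz rule for the Lie bracket in the first (function-scaled) argument. -/
lemma lb_smul_left {n : ℕ} {g : (Fin n → ℝ) → ℝ} {X : (Fin n → ℝ) → (Fin n → ℝ)}
    (Z : (Fin n → ℝ) → (Fin n → ℝ)) {x : Fin n → ℝ}
    (hg : DifferentiableAt ℝ g x) (hX : DifferentiableAt ℝ X x) :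
    VectorField.lieBracket ℝ (fun y => g y • X y) Z x
      = g x • VectorField.lieBracket ℝ X Z x - (fderiv ℝ g x (Z x)) • X x := by
  simp only [VectorField.lieBracket]
  rw [fderiv_fun_smul hg hX]
  simp only [map_smul, ContinuousLinearMap.add_apply, ContinuousLinearMap.smul_apply,
    ContinuousLinearMap.smulRight_apply, ContinuousLinearMap.coe_smul', Pi.smul_apply,
    smul_sub]
  module

/-- Leibniz rule for the Lie bracket of a sum of three function-scaled fields. -/
lemma lb3_smul_left {n : ℕ} {g₁ g₂ g₃ : (Fin n → ℝ) → ℝ}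
    {X₁ X₂ X₃ : (Fin n → ℝ) → (Fin n → ℝ)} (Z : (Fin n → ℝ) → (Fin n → ℝ)) {x : Fin n → ℝ}
    (hg₁ : DifferentiableAt ℝ g₁ x) (hg₂ : DifferentiableAt ℝ g₂ x)
    (hg₃ : DifferentiableAt ℝ g₃ x)
    (hX₁ : DifferentiableAt ℝ X₁ x) (hX₂ : DifferentiableAt ℝ X₂ x)
    (hX₃ : DifferentiableAt ℝ X₃ x) :
    VectorField.lieBracket ℝ (fun y => g₁ y • X₁ y + g₂ y • X₂ y + g₃ y • X₃ y) Z x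
      = (g₁ x • VectorField.lieBracket ℝ X₁ Z x - (fderiv ℝ g₁ x (Z x)) • X₁ x)
        + (g₂ x • VectorField.lieBracket ℝ X₂ Z x - (fderiv ℝ g₂ x (Z x)) • X₂ x)
        + (g₃ x • VectorField.lieBracket ℝ X₃ Z x - (fderiv ℝ g₃ x (Z x)) • X₃ x) := by
  have h : HasFDerivAt (fun y => g₁ y • X₁ y + g₂ y • X₂ y + g₃ y • X₃ y)
      (((g₁ x • fderiv ℝ X₁ x + (fderiv ℝ g₁ x).smulRight (X₁ x)) +
        (g₂ x • fderiv ℝ X₂ x + (fderiv ℝ g₂ x).smulRight (X₂ x))) +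
       (g₃ x • fderiv ℝ X₃ x + (fderiv ℝ g₃ x).smulRight (X₃ x))) x :=
    ((hg₁.hasFDerivAt.smul hX₁.hasFDerivAt).add (hg₂.hasFDerivAt.smul hX₂.hasFDerivAt)).add
      (hg₃.hasFDerivAt.smul hX₃.hasFDerivAt)
  simp only [VectorField.lieBracket, h.fderiv]
  simp only [map_add, map_smul, ContinuousLinearMap.add_apply, ContinuousLinearMap.smul_apply,
    ContinuousLinearMap.smulRight_apply, ContinuousLinearMap.coe_smul', Pi.smul_apply]
  module

/-- Jacobi-identity consequences for the integrability data of an adapted frame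
(equation (11.5) of the paper). -/
theorem stmt_0 (U : Set (Fin 3 → ℝ)) (hU : IsOpen U)
    (e₁ e₂ e₃ : (Fin 3 → ℝ) → (Fin 3 → ℝ))
    (f₁ f₂ k₁ k₂ σ : (Fin 3 → ℝ) → ℝ)
    (he₁ : ContDiffOn ℝ (⊤ : ℕ∞) e₁ U) (he₂ : ContDiffOn ℝ (⊤ : ℕ∞) e₂ U) (he₃ : ContDiffOn ℝ (⊤ : ℕ∞) e₃ U)
    (hf₁ : ContDiffOn ℝ (⊤ : ℕ∞) f₁ U) (hf₂ : ContDiffOn ℝ (⊤ : ℕ∞) f₂ U)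
    (hk₁ : ContDiffOn ℝ (⊤ : ℕ∞) k₁ U) (hk₂ : ContDiffOn ℝ (⊤ : ℕ∞) k₂ U) (hσ : ContDiffOn ℝ (⊤ : ℕ∞) σ U)
    (hind : ∀ p ∈ U, LinearIndependent ℝ ![e₁ p, e₂ p, e₃ p])
    (hb13 : ∀ p ∈ U, lieBracketVF e₁ e₃ p = k₁ p • e₃ p)
    (hb23 : ∀ p ∈ U, lieBracketVF e₂ e₃ p = k₂ p • e₃ p)
    (hb12 : ∀ p ∈ U,
      lieBracketVF e₁ e₂ p = f₁ p • e₁ p + f₂ p • e₂ p - (2 * σ p) • e₃ p) :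
    ∀ p ∈ U, dirDeriv e₃ f₁ p = 0 ∧ dirDeriv e₃ f₂ p = 0 ∧
      2 * dirDeriv e₃ σ p + k₁ p * f₁ p + k₂ p * f₂ p
        + dirDeriv e₂ k₁ p - dirDeriv e₁ k₂ p = 0 := by
  simp only [lieBracketVF_eq] at hb13 hb23 hb12
  intro p hp
  have hmem : U ∈ nhds p := hU.mem_nhds hp
  -- smoothness at p
  have c1 : ContDiffAt ℝ 2 e₁ p := (he₁.contDiffAt hmem).of_le (WithTop.coe_le_coe.mpr le_top)
  have c2 : ContDiffAt ℝ 2 e₂ p := (he₂.contDiffAt hmem).of_le (WithTop.coe_le_coe.mpr le_top)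
  have c3 : ContDiffAt ℝ 2 e₃ p := (he₃.contDiffAt hmem).of_le (WithTop.coe_le_coe.mpr le_top)
  have d1 : DifferentiableAt ℝ e₁ p := c1.differentiableAt two_ne_zero
  have d2 : DifferentiableAt ℝ e₂ p := c2.differentiableAt two_ne_zero
  have d3 : DifferentiableAt ℝ e₃ p := c3.differentiableAt two_ne_zero
  have df₁ : DifferentiableAt ℝ f₁ p :=
    ((hf₁.contDiffAt hmem).of_le (by simp)).differentiableAt one_ne_zero
  have df₂ : DifferentiableAt ℝ f₂ p :=
    ((hf₂.contDiffAt hmem).of_le (by simp)).differentiableAt one_ne_zero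
  have dk₁ : DifferentiableAt ℝ k₁ p :=
    ((hk₁.contDiffAt hmem).of_le (by simp)).differentiableAt one_ne_zero
  have dk₂ : DifferentiableAt ℝ k₂ p :=
    ((hk₂.contDiffAt hmem).of_le (by simp)).differentiableAt one_ne_zero
  have dσ : DifferentiableAt ℝ σ p :=
    ((hσ.contDiffAt hmem).of_le (by simp)).differentiableAt one_ne_zero
  -- Jacobi identity
  have J := VectorField.leibniz_identity_lieBracket (𝕜 := ℝ) (by simp) c3 c1 c2
  -- eventual equalities for the brackets
  have E12 : VectorField.lieBracket ℝ e₁ e₂ =ᶠ[nhds p]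
      fun q => f₁ q • e₁ q + f₂ q • e₂ q + (-(2 * σ q)) • e₃ q := by
    filter_upwards [hmem] with q hq
    rw [hb12 q hq]; module
  have E31 : VectorField.lieBracket ℝ e₃ e₁ =ᶠ[nhds p]
      fun q => (-(k₁ q)) • e₃ q := by
    filter_upwards [hmem] with q hq
    rw [VectorField.lieBracket_swap, hb13 q hq]; module
  have E32 : VectorField.lieBracket ℝ e₃ e₂ =ᶠ[nhds p]
      fun q => (-(k₂ q)) • e₃ q := by
    filter_upwards [hmem] with q hq
    rw [VectorField.lieBracket_swap, hb23 q hq]; module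
  -- derivatives of the negated coefficients
  have hg1 : fderiv ℝ (fun q => -(k₁ q)) p = -(fderiv ℝ k₁ p) :=
    dk₁.hasFDerivAt.neg.fderiv
  have hg2 : fderiv ℝ (fun q => -(k₂ q)) p = -(fderiv ℝ k₂ p) :=
    dk₂.hasFDerivAt.neg.fderiv
  have hg3 : fderiv ℝ (fun q => -(2 * σ q)) p = -((2 : ℝ) • fderiv ℝ σ p) :=
    ((dσ.hasFDerivAt.const_smul (2 : ℝ)).neg).fderiv
  -- Piece A : [e₃,[e₁,e₂]] p
  have hA : VectorField.lieBracket ℝ e₃ (VectorField.lieBracket ℝ e₁ e₂) p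
      = dirDeriv e₃ f₁ p • e₁ p + dirDeriv e₃ f₂ p • e₂ p
        - (f₁ p * k₁ p + f₂ p * k₂ p + 2 * dirDeriv e₃ σ p) • e₃ p := by
    rw [VectorField.lieBracket_swap,
      Filter.EventuallyEq.lieBracket_vectorField_eq E12 (Filter.EventuallyEq.refl _ _),
      lb3_smul_left e₃ df₁ df₂ ((dσ.const_mul 2).fun_neg) d1 d2 d3,
      hb13 p hp, hb23 p hp, VectorField.lieBracket_self, hg3]
    simp only [dirDeriv, Pi.zero_apply, smul_zero, ContinuousLinearMap.neg_apply,
      ContinuousLinearMap.coe_smul', Pi.smul_apply, smul_eq_mul]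
    module
  -- Piece B : [[e₃,e₁],e₂] p
  have hB : VectorField.lieBracket ℝ (VectorField.lieBracket ℝ e₃ e₁) e₂ p
      = (k₁ p * k₂ p + dirDeriv e₂ k₁ p) • e₃ p := by
    rw [Filter.EventuallyEq.lieBracket_vectorField_eq E31 (Filter.EventuallyEq.refl _ _),
      lb_smul_left e₂ dk₁.fun_neg d3, VectorField.lieBracket_swap, hb23 p hp, hg1]
    simp only [dirDeriv, ContinuousLinearMap.neg_apply, smul_eq_mul]
    module
  -- Piece C : [e₁,[e₃,e₂]] p
  have hC : VectorField.lieBracket ℝ e₁ (VectorField.lieBracket ℝ e₃ e₂) p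
      = -((k₂ p * k₁ p + dirDeriv e₁ k₂ p) • e₃ p) := by
    rw [VectorField.lieBracket_swap,
      Filter.EventuallyEq.lieBracket_vectorField_eq E32 (Filter.EventuallyEq.refl _ _),
      lb_smul_left e₁ dk₂.fun_neg d3, VectorField.lieBracket_swap, hb13 p hp, hg2]
    simp only [dirDeriv, ContinuousLinearMap.neg_apply, smul_eq_mul]
    module
  rw [hA, hB, hC] at J
  -- extract the linear combination
  set a := dirDeriv e₃ f₁ p with ha
  set b := dirDeriv e₃ f₂ p with hb
  set c := 2 * dirDeriv e₃ σ p + k₁ p * f₁ p + k₂ p * f₂ p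
      + dirDeriv e₂ k₁ p - dirDeriv e₁ k₂ p with hc
  have hzero : a • e₁ p + b • e₂ p + (-c) • e₃ p = 0 := by
    have hcc : (-c : ℝ) = -(f₁ p * k₁ p + f₂ p * k₂ p + 2 * dirDeriv e₃ σ p)
        - (k₁ p * k₂ p + dirDeriv e₂ k₁ p) + (k₂ p * k₁ p + dirDeriv e₁ k₂ p) := by
      rw [hc]; ring
    rw [hcc]
    linear_combination (norm := module) J
  have hli := hind p hp
  rw [Fintype.linearIndependent_iff] at hli
  have hco := hli ![a, b, -c] (by
    simpa [Fin.sum_univ_three] using hzero)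
  refine ⟨hco 0, hco 1, ?_⟩
  have := hco 2
  simp only [Matrix.cons_val_two, Matrix.tail_cons, Matrix.head_cons, neg_eq_zero] at this
  exact this
end

section
/- Let U be an open subset of ℝ³, let e₁, e₂, e₃ be smooth vector fields on U and f₁, f₂, k₁, k₂, σ smooth functions on U satisfying [e₁,e₃] = k₁·e₃, [e₂,e₃] = k₂·e₃, [e₁,e₂] = f₁·e₁ + f₂·e₂ − 2σ·e₃, and e₃(f₁) = e₃(f₂) = 0. If there is a constant c ∈ ℝ such that e₂(f₁) − e₁(f₂) + f₁² + f₂² − 3σ² = −c holds identically on U, then σ·e₃(σ) = 0 identically on U. -/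
lemma dd_diff {n : ℕ} {U : Set (Fin n → ℝ)} (hU : IsOpen U)
    {X : (Fin n → ℝ) → (Fin n → ℝ)} {g : (Fin n → ℝ) → ℝ}
    (hX : ContDiffOn ℝ (⊤ : ℕ∞) X U) (hg : ContDiffOn ℝ (⊤ : ℕ∞) g U) {p} (hp : p ∈ U) :
    DifferentiableAt ℝ (dirDeriv X g) p := by
  have hgA : ContDiffAt ℝ (⊤ : ℕ∞) g p := hg.contDiffAt (hU.mem_nhds hp)
  have hXA : ContDiffAt ℝ (⊤ : ℕ∞) X p := hX.contDiffAt (hU.mem_nhds hp)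
  have hdg : ContDiffAt ℝ (⊤ : ℕ∞) (fderiv ℝ g) p := hgA.fderiv_right (by simp)
  exact (hdg.differentiableAt (by simp)).clm_apply (hXA.differentiableAt (by simp))

lemma dd_comm {n : ℕ} {U : Set (Fin n → ℝ)} (hU : IsOpen U)
    {X Y : (Fin n → ℝ) → (Fin n → ℝ)} {g : (Fin n → ℝ) → ℝ}
    (hX : ContDiffOn ℝ (⊤ : ℕ∞) X U) (hY : ContDiffOn ℝ (⊤ : ℕ∞) Y U)
    (hg : ContDiffOn ℝ (⊤ : ℕ∞) g U) {p} (hp : p ∈ U) :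
    dirDeriv X (dirDeriv Y g) p - dirDeriv Y (dirDeriv X g) p
      = dirDeriv (lieBracketVF X Y) g p := by
  have hgA : ContDiffAt ℝ (⊤ : ℕ∞) g p := hg.contDiffAt (hU.mem_nhds hp)
  have hXA : ContDiffAt ℝ (⊤ : ℕ∞) X p := hX.contDiffAt (hU.mem_nhds hp)
  have hYA : ContDiffAt ℝ (⊤ : ℕ∞) Y p := hY.contDiffAt (hU.mem_nhds hp)
  have hdg : ContDiffAt ℝ (⊤ : ℕ∞) (fderiv ℝ g) p := hgA.fderiv_right (by simp)
  have hsymm : IsSymmSndFDerivAt ℝ g p := hgA.isSymmSndFDerivAt (by simp; exact WithTop.coe_le_coe.mpr (le_top : (2:ℕ∞) ≤ ⊤))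
  have h1 : fderiv ℝ (dirDeriv Y g) p =
      (fderiv ℝ g p).comp (fderiv ℝ Y p) + (fderiv ℝ (fderiv ℝ g) p).flip (Y p) :=
    fderiv_clm_apply (hdg.differentiableAt (by simp)) (hYA.differentiableAt (by simp))
  have h2 : fderiv ℝ (dirDeriv X g) p =
      (fderiv ℝ g p).comp (fderiv ℝ X p) + (fderiv ℝ (fderiv ℝ g) p).flip (X p) :=
    fderiv_clm_apply (hdg.differentiableAt (by simp)) (hXA.differentiableAt (by simp))
  simp only [dirDeriv, lieBracketVF]
  rw [h1, h2]
  simp only [ContinuousLinearMap.add_apply, ContinuousLinearMap.flip_apply,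
    ContinuousLinearMap.comp_apply, map_sub]
  rw [hsymm (X p) (Y p)]
  ring

lemma dd_zero {n : ℕ} {U : Set (Fin n → ℝ)} (hU : IsOpen U)
    {X : (Fin n → ℝ) → (Fin n → ℝ)} {g : (Fin n → ℝ) → ℝ}
    (h : ∀ q ∈ U, g q = 0) {p} (hp : p ∈ U) :
    dirDeriv X g p = 0 := by
  have : fderiv ℝ g p = fderiv ℝ (fun _ => (0:ℝ)) p := by
    apply Filter.EventuallyEq.fderiv_eq
    filter_upwards [hU.mem_nhds hp] using h
  simp [dirDeriv, this]

/-- Applying `e₃` to the curvature equation `R₁₂₁₂ = −c` yields `σ · e₃(σ) = 0`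
(key step in Lemma 4 of the paper). -/
theorem stmt_1 (U : Set (Fin 3 → ℝ)) (hU : IsOpen U)
    (e₁ e₂ e₃ : (Fin 3 → ℝ) → (Fin 3 → ℝ))
    (f₁ f₂ k₁ k₂ σ : (Fin 3 → ℝ) → ℝ) (c : ℝ)
    (he₁ : ContDiffOn ℝ (⊤ : ℕ∞) e₁ U) (he₂ : ContDiffOn ℝ (⊤ : ℕ∞) e₂ U) (he₃ : ContDiffOn ℝ (⊤ : ℕ∞) e₃ U)
    (hf₁ : ContDiffOn ℝ (⊤ : ℕ∞) f₁ U) (hf₂ : ContDiffOn ℝ (⊤ : ℕ∞) f₂ U)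
    (hk₁ : ContDiffOn ℝ (⊤ : ℕ∞) k₁ U) (hk₂ : ContDiffOn ℝ (⊤ : ℕ∞) k₂ U) (hσ : ContDiffOn ℝ (⊤ : ℕ∞) σ U)
    (hb13 : ∀ p ∈ U, lieBracketVF e₁ e₃ p = k₁ p • e₃ p)
    (hb23 : ∀ p ∈ U, lieBracketVF e₂ e₃ p = k₂ p • e₃ p)
    (hb12 : ∀ p ∈ U,
      lieBracketVF e₁ e₂ p = f₁ p • e₁ p + f₂ p • e₂ p - (2 * σ p) • e₃ p)
    (hf₁const : ∀ p ∈ U, dirDeriv e₃ f₁ p = 0)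
    (hf₂const : ∀ p ∈ U, dirDeriv e₃ f₂ p = 0)
    (hcurv : ∀ p ∈ U, dirDeriv e₂ f₁ p - dirDeriv e₁ f₂ p
      + f₁ p ^ 2 + f₂ p ^ 2 - 3 * σ p ^ 2 = -c) :
    ∀ p ∈ U, σ p * dirDeriv e₃ σ p = 0 := by
  intro p hp
  have hnb := hU.mem_nhds hp
  have HA : DifferentiableAt ℝ (dirDeriv e₂ f₁) p := dd_diff hU he₂ hf₁ hp
  have HB : DifferentiableAt ℝ (dirDeriv e₁ f₂) p := dd_diff hU he₁ hf₂ hp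
  have Hf1 : DifferentiableAt ℝ f₁ p := (hf₁.contDiffAt hnb).differentiableAt (by simp)
  have Hf2 : DifferentiableAt ℝ f₂ p := (hf₂.contDiffAt hnb).differentiableAt (by simp)
  have Hs : DifferentiableAt ℝ σ p := (hσ.contDiffAt hnb).differentiableAt (by simp)
  -- the curvature equation, differentiated along e₃
  have hG0 : dirDeriv e₃ (fun q => dirDeriv e₂ f₁ q - dirDeriv e₁ f₂ q
      + f₁ q ^ 2 + f₂ q ^ 2 - 3 * σ q ^ 2 + c) p = 0 := by
    refine dd_zero hU (fun q hq => ?_) hp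
    have := hcurv q hq; linarith
  -- expand the derivative
  have hsq : ∀ (g : (Fin 3 → ℝ) → ℝ), DifferentiableAt ℝ g p →
      HasFDerivAt (fun q => g q ^ 2) ((2 * g p) • fderiv ℝ g p) p := by
    intro g hg
    have := hg.hasFDerivAt.mul hg.hasFDerivAt
    have h2 : g p • fderiv ℝ g p + g p • fderiv ℝ g p = (2 * g p) • fderiv ℝ g p := by
      rw [two_mul, add_smul]
    rw [h2] at this
    simp only [pow_two]
    exact this
  have HG : HasFDerivAt (fun q => dirDeriv e₂ f₁ q - dirDeriv e₁ f₂ q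
      + f₁ q ^ 2 + f₂ q ^ 2 - 3 * σ q ^ 2 + c)
      (fderiv ℝ (dirDeriv e₂ f₁) p - fderiv ℝ (dirDeriv e₁ f₂) p
        + (2 * f₁ p) • fderiv ℝ f₁ p + (2 * f₂ p) • fderiv ℝ f₂ p
        - (3:ℝ) • ((2 * σ p) • fderiv ℝ σ p)) p := by
    exact (((((HA.hasFDerivAt.sub HB.hasFDerivAt).add (hsq f₁ Hf1)).add
      (hsq f₂ Hf2)).sub ((hsq σ Hs).const_mul 3)).add_const c)
  have hexp : dirDeriv e₃ (dirDeriv e₂ f₁) p - dirDeriv e₃ (dirDeriv e₁ f₂) p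
      + (2 * f₁ p) * dirDeriv e₃ f₁ p + (2 * f₂ p) * dirDeriv e₃ f₂ p
      - 3 * ((2 * σ p) * dirDeriv e₃ σ p) = 0 := by
    have h : (fderiv ℝ (fun q => dirDeriv e₂ f₁ q - dirDeriv e₁ f₂ q
        + f₁ q ^ 2 + f₂ q ^ 2 - 3 * σ q ^ 2 + c) p) (e₃ p) = 0 := hG0
    rw [HG.fderiv] at h
    simp only [ContinuousLinearMap.sub_apply, ContinuousLinearMap.add_apply,
      ContinuousLinearMap.smul_apply, smul_eq_mul] at h
    exact h
  -- dirDeriv e₃ (dirDeriv e₂ f₁) p = 0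
  have hz1 : ∀ q ∈ U, dirDeriv e₃ f₁ q = 0 := hf₁const
  have hz2 : ∀ q ∈ U, dirDeriv e₃ f₂ q = 0 := hf₂const
  have hA0 : dirDeriv e₃ (dirDeriv e₂ f₁) p = 0 := by
    have hc := dd_comm hU he₃ he₂ hf₁ hp
    have h1 : dirDeriv e₂ (dirDeriv e₃ f₁) p = 0 := dd_zero hU hz1 hp
    have h2 : dirDeriv (lieBracketVF e₃ e₂) f₁ p = 0 := by
      have hl : lieBracketVF e₃ e₂ p = -(k₂ p • e₃ p) := by
        rw [← hb23 p hp]; simp [lieBracketVF]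
      have h0 : fderiv ℝ f₁ p (e₃ p) = 0 := hf₁const p hp
      simp [dirDeriv, hl, h0]
    linarith [hc, h1, h2]
  have hB0 : dirDeriv e₃ (dirDeriv e₁ f₂) p = 0 := by
    have hc := dd_comm hU he₃ he₁ hf₂ hp
    have h1 : dirDeriv e₁ (dirDeriv e₃ f₂) p = 0 := dd_zero hU hz2 hp
    have h2 : dirDeriv (lieBracketVF e₃ e₁) f₂ p = 0 := by
      have hl : lieBracketVF e₃ e₁ p = -(k₁ p • e₃ p) := by
        rw [← hb13 p hp]; simp [lieBracketVF]
      have h0 : fderiv ℝ f₂ p (e₃ p) = 0 := hf₂const p hp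
      simp [dirDeriv, hl, h0]
    linarith [hc, h1, h2]
  have hd1 := hf₁const p hp
  have hd2 := hf₂const p hp
  rw [hA0, hB0, hd1, hd2] at hexp
  linarith
end

section
/- Let U be an open subset of ℝ³, let e₁, e₂, e₃ be smooth vector fields on U and f₁, f₂, k₁, k₂, σ smooth functions on U satisfying [e₁,e₃] = k₁·e₃, [e₂,e₃] = k₂·e₃, [e₁,e₂] = f₁·e₁ + f₂·e₂ − 2σ·e₃, and e₃(f₁) = e₃(f₂) = 0. If there is a constant c ∈ ℝ such that e₂(f₁) − e₁(f₂) + f₁² + f₂² − 3σ² = −c holds identically on U, then e₃(σ) = 0 identically on U. -/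
/-- Derivative of `q ↦ dg_q(Y q)`. -/
lemma hasFDerivAt_dirDeriv {U : Set (Fin 3 → ℝ)} (hU : IsOpen U) {p : Fin 3 → ℝ} (hp : p ∈ U)
    {g : (Fin 3 → ℝ) → ℝ} {Y : (Fin 3 → ℝ) → (Fin 3 → ℝ)}
    (hg : ContDiffOn ℝ (⊤ : ℕ∞) g U) (hY : ContDiffOn ℝ (⊤ : ℕ∞) Y U) :
    HasFDerivAt (dirDeriv Y g)
      ((fderiv ℝ g p).comp (fderiv ℝ Y p) + (fderiv ℝ (fderiv ℝ g) p).flip (Y p)) p := by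
  have hUp : U ∈ nhds p := hU.mem_nhds hp
  have hg' : ContDiffOn ℝ 1 (fderiv ℝ g) U :=
    hg.fderiv_of_isOpen hU ((WithTop.coe_le_coe.mpr le_top))
  have hgd : DifferentiableAt ℝ (fderiv ℝ g) p :=
    ((hg'.differentiableOn one_ne_zero) p hp).differentiableAt hUp
  have hYd : DifferentiableAt ℝ Y p :=
    ((hY.differentiableOn (by simp)) p hp).differentiableAt hUp
  exact hgd.hasFDerivAt.clm_apply hYd.hasFDerivAt

/-- First assertion of Lemma 4 of the paper: `σ` is constant along the fibers,
i.e. `e₃(σ) = 0`. -/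
theorem stmt_3 (U : Set (Fin 3 → ℝ)) (hU : IsOpen U)
    (e₁ e₂ e₃ : (Fin 3 → ℝ) → (Fin 3 → ℝ))
    (f₁ f₂ k₁ k₂ σ : (Fin 3 → ℝ) → ℝ) (c : ℝ)
    (he₁ : ContDiffOn ℝ (⊤ : ℕ∞) e₁ U) (he₂ : ContDiffOn ℝ (⊤ : ℕ∞) e₂ U) (he₃ : ContDiffOn ℝ (⊤ : ℕ∞) e₃ U)
    (hf₁ : ContDiffOn ℝ (⊤ : ℕ∞) f₁ U) (hf₂ : ContDiffOn ℝ (⊤ : ℕ∞) f₂ U)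
    (hk₁ : ContDiffOn ℝ (⊤ : ℕ∞) k₁ U) (hk₂ : ContDiffOn ℝ (⊤ : ℕ∞) k₂ U) (hσ : ContDiffOn ℝ (⊤ : ℕ∞) σ U)
    (hb13 : ∀ p ∈ U, lieBracketVF e₁ e₃ p = k₁ p • e₃ p)
    (hb23 : ∀ p ∈ U, lieBracketVF e₂ e₃ p = k₂ p • e₃ p)
    (hb12 : ∀ p ∈ U,
      lieBracketVF e₁ e₂ p = f₁ p • e₁ p + f₂ p • e₂ p - (2 * σ p) • e₃ p)
    (hf₁const : ∀ p ∈ U, dirDeriv e₃ f₁ p = 0)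
    (hf₂const : ∀ p ∈ U, dirDeriv e₃ f₂ p = 0)
    (hcurv : ∀ p ∈ U, dirDeriv e₂ f₁ p - dirDeriv e₁ f₂ p
      + f₁ p ^ 2 + f₂ p ^ 2 - 3 * σ p ^ 2 = -c) :
    ∀ p ∈ U, dirDeriv e₃ σ p = 0 := by
  -- Step 1: σ p * e₃(σ) p = 0 on U.
  have key : ∀ p ∈ U, σ p * dirDeriv e₃ σ p = 0 := by
    intro p hp
    have hUp : U ∈ nhds p := hU.mem_nhds hp
    -- differentiability data at p
    have dAt : ∀ (g : (Fin 3 → ℝ) → ℝ), ContDiffOn ℝ (⊤ : ℕ∞) g U → DifferentiableAt ℝ g p := by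
      intro g hg
      exact ((hg.differentiableOn (by simp)) p hp).differentiableAt hUp
    -- symmetry of second derivatives
    have sym : ∀ (g : (Fin 3 → ℝ) → ℝ), ContDiffOn ℝ (⊤ : ℕ∞) g U → ∀ v w,
        fderiv ℝ (fderiv ℝ g) p v w = fderiv ℝ (fderiv ℝ g) p w v := by
      intro g hg v w
      have hev : ∀ᶠ q in nhds p, HasFDerivAt g (fderiv ℝ g q) q := by
        filter_upwards [hU.eventually_mem hp] with q hq
        exact (((hg.differentiableOn (by simp)) q hq).differentiableAt
          (hU.mem_nhds hq)).hasFDerivAt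
      have hg' : ContDiffOn ℝ 1 (fderiv ℝ g) U := hg.fderiv_of_isOpen hU (WithTop.coe_le_coe.mpr le_top)
      have hgd : DifferentiableAt ℝ (fderiv ℝ g) p :=
        ((hg'.differentiableOn one_ne_zero) p hp).differentiableAt hUp
      exact second_derivative_symmetric_of_eventually hev hgd.hasFDerivAt v w
    -- if e₃(g) = 0 on U, then D²g(v, e₃ p) + Dg(De₃(v)) = 0
    have zlem : ∀ (g : (Fin 3 → ℝ) → ℝ), ContDiffOn ℝ (⊤ : ℕ∞) g U →
        (∀ q ∈ U, dirDeriv e₃ g q = 0) → ∀ v,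
        fderiv ℝ (fderiv ℝ g) p v (e₃ p) + fderiv ℝ g p (fderiv ℝ e₃ p v) = 0 := by
      intro g hg h0 v
      have hA := hasFDerivAt_dirDeriv hU hp hg he₃
      have hB : HasFDerivAt (dirDeriv e₃ g) (0 : (Fin 3 → ℝ) →L[ℝ] ℝ) p := by
        have : dirDeriv e₃ g =ᶠ[nhds p] fun _ => (0 : ℝ) := by
          filter_upwards [hU.eventually_mem hp] with q hq using h0 q hq
        exact (hasFDerivAt_const (0 : ℝ) p).congr_of_eventuallyEq this
      have := hB.unique hA
      have hv := congrArg (fun (L : (Fin 3 → ℝ) →L[ℝ] ℝ) => L v) this.symm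
      simp only [ContinuousLinearMap.add_apply, ContinuousLinearMap.coe_comp',
        ContinuousLinearMap.flip_apply, Function.comp_apply,
        ContinuousLinearMap.zero_apply] at hv
      linarith [hv]
    -- derivative of the curvature identity along e₃
    have hA := hasFDerivAt_dirDeriv hU hp hf₁ he₂  -- dirDeriv e₂ f₁
    have hB := hasFDerivAt_dirDeriv hU hp hf₂ he₁  -- dirDeriv e₁ f₂
    have hf₁d := dAt f₁ hf₁
    have hf₂d := dAt f₂ hf₂
    have hσd := dAt σ hσ
    have hsq₁ : HasFDerivAt (fun q => f₁ q ^ 2)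
        (f₁ p • fderiv ℝ f₁ p + f₁ p • fderiv ℝ f₁ p) p := by
      simp only [pow_two]
      exact hf₁d.hasFDerivAt.mul hf₁d.hasFDerivAt
    have hsq₂ : HasFDerivAt (fun q => f₂ q ^ 2)
        (f₂ p • fderiv ℝ f₂ p + f₂ p • fderiv ℝ f₂ p) p := by
      simp only [pow_two]
      exact hf₂d.hasFDerivAt.mul hf₂d.hasFDerivAt
    have hsq₃ : HasFDerivAt (fun q => 3 * σ q ^ 2)
        ((3:ℝ) • (σ p • fderiv ℝ σ p + σ p • fderiv ℝ σ p)) p := by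
      have h : HasFDerivAt (fun q => σ q ^ 2)
          (σ p • fderiv ℝ σ p + σ p • fderiv ℝ σ p) p := by
        simp only [pow_two]
        exact hσd.hasFDerivAt.mul hσd.hasFDerivAt
      simpa using h.const_mul (3 : ℝ)
    have hG := ((((hA.sub hB).add hsq₁).add hsq₂).sub hsq₃)
    have hG0 : HasFDerivAt (fun q => dirDeriv e₂ f₁ q - dirDeriv e₁ f₂ q
        + f₁ q ^ 2 + f₂ q ^ 2 - 3 * σ q ^ 2) (0 : (Fin 3 → ℝ) →L[ℝ] ℝ) p := by
      have : (fun q => dirDeriv e₂ f₁ q - dirDeriv e₁ f₂ q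
          + f₁ q ^ 2 + f₂ q ^ 2 - 3 * σ q ^ 2) =ᶠ[nhds p] fun _ => -c := by
        filter_upwards [hU.eventually_mem hp] with q hq using hcurv q hq
      exact (hasFDerivAt_const (-c) p).congr_of_eventuallyEq this
    have heq := hG0.unique hG
    have hv := congrArg (fun (L : (Fin 3 → ℝ) →L[ℝ] ℝ) => L (e₃ p)) heq
    simp only [ContinuousLinearMap.add_apply, ContinuousLinearMap.sub_apply,
      ContinuousLinearMap.coe_comp', ContinuousLinearMap.flip_apply, Function.comp_apply,
      ContinuousLinearMap.smul_apply, ContinuousLinearMap.zero_apply, smul_eq_mul] at hv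
    -- the f₁ block vanishes
    have e3f₁ : fderiv ℝ f₁ p (e₃ p) = 0 := hf₁const p hp
    have e3f₂ : fderiv ℝ f₂ p (e₃ p) = 0 := hf₂const p hp
    have e3σ : dirDeriv e₃ σ p = fderiv ℝ σ p (e₃ p) := rfl
    have block₁ : fderiv ℝ (fderiv ℝ f₁) p (e₃ p) (e₂ p)
        + fderiv ℝ f₁ p (fderiv ℝ e₂ p (e₃ p)) = 0 := by
      have hz := zlem f₁ hf₁ hf₁const (e₂ p)
      have hsym := sym f₁ hf₁ (e₃ p) (e₂ p)
      -- lieBracketVF e₃ e₂ = - lieBracketVF e₂ e₃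
      have hbr : fderiv ℝ e₂ p (e₃ p) - fderiv ℝ e₃ p (e₂ p) = -(k₂ p • e₃ p) := by
        have h := hb23 p hp
        simp only [lieBracketVF] at h
        rw [← h]; abel
      have : fderiv ℝ f₁ p (fderiv ℝ e₂ p (e₃ p))
          - fderiv ℝ f₁ p (fderiv ℝ e₃ p (e₂ p)) = 0 := by
        rw [← map_sub, hbr, map_neg, map_smul, smul_eq_mul, e3f₁, mul_zero, neg_zero]
      rw [hsym]; linarith
    have block₂ : fderiv ℝ (fderiv ℝ f₂) p (e₃ p) (e₁ p)
        + fderiv ℝ f₂ p (fderiv ℝ e₁ p (e₃ p)) = 0 := by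
      have hz := zlem f₂ hf₂ hf₂const (e₁ p)
      have hsym := sym f₂ hf₂ (e₃ p) (e₁ p)
      have hbr : fderiv ℝ e₁ p (e₃ p) - fderiv ℝ e₃ p (e₁ p) = -(k₁ p • e₃ p) := by
        have h := hb13 p hp
        simp only [lieBracketVF] at h
        rw [← h]; abel
      have : fderiv ℝ f₂ p (fderiv ℝ e₁ p (e₃ p))
          - fderiv ℝ f₂ p (fderiv ℝ e₃ p (e₁ p)) = 0 := by
        rw [← map_sub, hbr, map_neg, map_smul, smul_eq_mul, e3f₂, mul_zero, neg_zero]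
      rw [hsym]; linarith
    rw [e3σ]
    rw [e3f₁, e3f₂] at hv
    simp only [mul_zero, add_zero] at hv
    linarith [hv, block₁, block₂]
  -- Step 2: upgrade σ·e₃(σ) = 0 to e₃(σ) = 0 by continuity.
  intro p hp
  by_contra hne
  have hUp : U ∈ nhds p := hU.mem_nhds hp
  have hE : ContinuousOn (fun q => fderiv ℝ σ q (e₃ q)) U := by
    have h1 : ContinuousOn (fderiv ℝ σ) U := hσ.continuousOn_fderiv_of_isOpen hU (by simp)
    exact h1.clm_apply (he₃.continuousOn)
  have hEat : ContinuousAt (fun q => fderiv ℝ σ q (e₃ q)) p :=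
    hE.continuousAt hUp
  have hev : ∀ᶠ q in nhds p, fderiv ℝ σ q (e₃ q) ≠ 0 :=
    hEat.eventually_ne hne
  have hσ0 : σ =ᶠ[nhds p] fun _ => (0 : ℝ) := by
    filter_upwards [hev, hU.eventually_mem hp] with q hq hqU
    have := key q hqU
    simp only [dirDeriv] at this
    exact (mul_eq_zero.1 this).resolve_right hq
  have : fderiv ℝ σ p = 0 := by
    rw [Filter.EventuallyEq.fderiv_eq hσ0]
    exact fderiv_const_apply 0
  exact hne (by simp [dirDeriv, this])
end

section
/- Let U be an open subset of ℝ³, let e₁, e₂, e₃ be smooth vector fields on U and f₁, f₂, k₁, k₂, σ smooth functions on U satisfying [e₁,e₃] = k₁·e₃, [e₂,e₃] = k₂·e₃, [e₁,e₂] = f₁·e₁ + f₂·e₂ − 2σ·e₃. Assume e₃(σ) = 0, e₁(σ) = 2k₁σ and e₂(σ) = 2k₂σ identically on U. Then σ·e₃(k₁) = 0 and σ·e₃(k₂) = 0 identically on U. -/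
lemma key_aux {n : ℕ} {U : Set (Fin n → ℝ)} (hU : IsOpen U)
    {X Y : (Fin n → ℝ) → (Fin n → ℝ)} {k σ : (Fin n → ℝ) → ℝ}
    (hX : ContDiffOn ℝ (⊤ : ℕ∞) X U) (hY : ContDiffOn ℝ (⊤ : ℕ∞) Y U)
    (hk : ContDiffOn ℝ (⊤ : ℕ∞) k U) (hσ : ContDiffOn ℝ (⊤ : ℕ∞) σ U)
    (hb : ∀ p ∈ U, lieBracketVF X Y p = k p • Y p)
    (hσY : ∀ p ∈ U, dirDeriv Y σ p = 0)
    (hσX : ∀ p ∈ U, dirDeriv X σ p = 2 * k p * σ p) :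
    ∀ p ∈ U, σ p * dirDeriv Y k p = 0 := by
  intro p hp
  have hmem : U ∈ nhds p := hU.mem_nhds hp
  have hσp : ContDiffAt ℝ (⊤ : ℕ∞) σ p := (hσ p hp).contDiffAt hmem
  have hXp : DifferentiableAt ℝ X p :=
    ((hX p hp).contDiffAt hmem).differentiableAt (by simp)
  have hYp : DifferentiableAt ℝ Y p :=
    ((hY p hp).contDiffAt hmem).differentiableAt (by simp)
  have hkp : DifferentiableAt ℝ k p :=
    ((hk p hp).contDiffAt hmem).differentiableAt (by simp)
  have hσp1 : DifferentiableAt ℝ σ p := hσp.differentiableAt (by simp)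
  have hD2 : DifferentiableAt ℝ (fderiv ℝ σ) p :=
    (hσp.fderiv_right (m := 1) (by exact WithTop.coe_le_coe.mpr le_top)).differentiableAt one_ne_zero
  set D2 := fderiv ℝ (fderiv ℝ σ) p with hD2def
  -- first mixed derivative
  have h1 : fderiv ℝ (dirDeriv X σ) p (Y p)
      = fderiv ℝ σ p (fderiv ℝ X p (Y p)) + D2 (Y p) (X p) := by
    have := fderiv_clm_apply (c := fderiv ℝ σ) (u := X) hD2 hXp
    have h' := congrArg (fun L => L (Y p)) this
    rw [show dirDeriv X σ = fun y => fderiv ℝ σ y (X y) from rfl]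
    simpa [dirDeriv] using h'
  -- second mixed derivative: dirDeriv Y σ vanishes on U
  have hzero : dirDeriv Y σ =ᶠ[nhds p] (fun _ => (0 : ℝ)) := by
    filter_upwards [hmem] with q hq using hσY q hq
  have h2 : fderiv ℝ σ p (fderiv ℝ Y p (X p)) + D2 (X p) (Y p) = 0 := by
    have := fderiv_clm_apply (c := fderiv ℝ σ) (u := Y) hD2 hYp
    have h' := congrArg (fun L => L (X p)) this
    have hz : fderiv ℝ (dirDeriv Y σ) p = 0 := by
      rw [hzero.fderiv_eq]; exact fderiv_const_apply 0
    have : fderiv ℝ (dirDeriv Y σ) p (X p)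
        = fderiv ℝ σ p (fderiv ℝ Y p (X p)) + D2 (X p) (Y p) := by
      rw [show dirDeriv Y σ = fun y => fderiv ℝ σ y (Y y) from rfl]
      simpa [dirDeriv] using h'
    rw [hz] at this
    simpa using this.symm
  -- symmetry of second derivative
  have hsymm : D2 (Y p) (X p) = D2 (X p) (Y p) :=
    (hσp.isSymmSndFDerivAt (by simp [minSmoothness_of_isRCLikeNormedField]; exact WithTop.coe_le_coe.mpr le_top)) (Y p) (X p)
  -- bracket relation
  have hbr : fderiv ℝ Y p (X p) - fderiv ℝ X p (Y p) = k p • Y p := hb p hp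
  -- hence Y(X(σ)) = 0 at p
  have hA : fderiv ℝ (dirDeriv X σ) p (Y p) = 0 := by
    rw [h1, hsymm]
    have h3 : fderiv ℝ σ p (fderiv ℝ Y p (X p)) = k p * fderiv ℝ σ p (Y p)
        + fderiv ℝ σ p (fderiv ℝ X p (Y p)) := by
      have : fderiv ℝ Y p (X p) = k p • Y p + fderiv ℝ X p (Y p) := by
        rw [← hbr]; abel
      rw [this, map_add, map_smul]; simp [smul_eq_mul]
    have hYσ : fderiv ℝ σ p (Y p) = 0 := hσY p hp
    rw [h3, hYσ] at h2
    linarith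
  -- algebraic computation: dirDeriv X σ = 2kσ near p
  have heq : dirDeriv X σ =ᶠ[nhds p] (fun q => 2 * k q * σ q) := by
    filter_upwards [hmem] with q hq using hσX q hq
  have hB : fderiv ℝ (dirDeriv X σ) p (Y p)
      = 2 * (fderiv ℝ k p (Y p) * σ p + k p * fderiv ℝ σ p (Y p)) := by
    rw [heq.fderiv_eq]
    have : fderiv ℝ (fun q => 2 * k q * σ q) p
        = 2 • (σ p • fderiv ℝ k p + k p • fderiv ℝ σ p) := by
      have h := fderiv_fun_mul (𝕜 := ℝ) (x := p) (c := fun y => 2 * k y) ((differentiableAt_const 2).mul hkp) hσp1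
      have h2' := fderiv_const_mul (𝕜 := ℝ) (x := p) hkp (2 : ℝ)
      rw [h, h2']
      ext v
      simp [smul_eq_mul]
      ring
    rw [this]
    simp [smul_eq_mul]
    ring
  have hYσ : fderiv ℝ σ p (Y p) = 0 := hσY p hp
  rw [hA, hYσ] at hB
  have : fderiv ℝ k p (Y p) * σ p = 0 := by linarith
  simpa [dirDeriv, mul_comm] using this


/-- Second step of Lemma 4 of the paper: applying `e₃` to the curvature equations
`e₁(σ) = 2k₁σ` and `e₂(σ) = 2k₂σ` yields `σ·e₃(k₁) = 0` and `σ·e₃(k₂) = 0`. -/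
theorem stmt_4 (U : Set (Fin 3 → ℝ)) (hU : IsOpen U)
    (e₁ e₂ e₃ : (Fin 3 → ℝ) → (Fin 3 → ℝ))
    (f₁ f₂ k₁ k₂ σ : (Fin 3 → ℝ) → ℝ)
    (he₁ : ContDiffOn ℝ (⊤ : ℕ∞) e₁ U) (he₂ : ContDiffOn ℝ (⊤ : ℕ∞) e₂ U) (he₃ : ContDiffOn ℝ (⊤ : ℕ∞) e₃ U)
    (hf₁ : ContDiffOn ℝ (⊤ : ℕ∞) f₁ U) (hf₂ : ContDiffOn ℝ (⊤ : ℕ∞) f₂ U)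
    (hk₁ : ContDiffOn ℝ (⊤ : ℕ∞) k₁ U) (hk₂ : ContDiffOn ℝ (⊤ : ℕ∞) k₂ U) (hσ : ContDiffOn ℝ (⊤ : ℕ∞) σ U)
    (hb13 : ∀ p ∈ U, lieBracketVF e₁ e₃ p = k₁ p • e₃ p)
    (hb23 : ∀ p ∈ U, lieBracketVF e₂ e₃ p = k₂ p • e₃ p)
    (hb12 : ∀ p ∈ U,
      lieBracketVF e₁ e₂ p = f₁ p • e₁ p + f₂ p • e₂ p - (2 * σ p) • e₃ p)
    (hσ3 : ∀ p ∈ U, dirDeriv e₃ σ p = 0)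
    (hσ1 : ∀ p ∈ U, dirDeriv e₁ σ p = 2 * k₁ p * σ p)
    (hσ2 : ∀ p ∈ U, dirDeriv e₂ σ p = 2 * k₂ p * σ p) :
    ∀ p ∈ U, σ p * dirDeriv e₃ k₁ p = 0 ∧ σ p * dirDeriv e₃ k₂ p = 0 := by
  intro p hp
  exact ⟨key_aux hU he₁ he₃ hk₁ hσ hb13 hσ3 hσ1 p hp,
         key_aux hU he₂ he₃ hk₂ hσ hb23 hσ3 hσ2 p hp⟩
end

section
/- Let U be an open subset of ℝ³, let e₁, e₂, e₃ be smooth vector fields on U and k₁, k₂ smooth functions on U satisfying [e₁,e₃] = k₁·e₃ and [e₂,e₃] = k₂·e₃, with e₃(k₁) = 0, e₃(k₂) = 0, and k₁² + k₂² > 0 at every point of U. Define r = √(k₁² + k₂²), e₁' = (k₁/r)·e₁ + (k₂/r)·e₂ and e₂' = (−k₂/r)·e₁ + (k₁/r)·e₂. Then [e₁', e₃] = r·e₃ and [e₂', e₃] = 0 on U. -/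
/-- Bracket of a combination `f₁ • e₁ + f₂ • e₂` with `e₃`, when the coefficients
are constant along `e₃`. -/
lemma bracket_comb {e₁ e₂ e₃ : (Fin 3 → ℝ) → (Fin 3 → ℝ)} {f₁ f₂ : (Fin 3 → ℝ) → ℝ}
    {p : Fin 3 → ℝ}
    (hf₁ : DifferentiableAt ℝ f₁ p) (hf₂ : DifferentiableAt ℝ f₂ p)
    (he₁ : DifferentiableAt ℝ e₁ p) (he₂ : DifferentiableAt ℝ e₂ p)
    (hdf₁ : fderiv ℝ f₁ p (e₃ p) = 0) (hdf₂ : fderiv ℝ f₂ p (e₃ p) = 0) :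
    lieBracketVF (fun q => f₁ q • e₁ q + f₂ q • e₂ q) e₃ p
      = f₁ p • lieBracketVF e₁ e₃ p + f₂ p • lieBracketVF e₂ e₃ p := by
  unfold lieBracketVF
  rw [fderiv_fun_add (f := fun q => f₁ q • e₁ q) (g := fun q => f₂ q • e₂ q)
      (hf₁.smul he₁) (hf₂.smul he₂), fderiv_fun_smul hf₁ he₁, fderiv_fun_smul hf₂ he₂]
  simp only [ContinuousLinearMap.add_apply, ContinuousLinearMap.smul_apply,
    ContinuousLinearMap.smulRight_apply, hdf₁, hdf₂, zero_smul, add_zero, map_add,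
    map_smul, smul_sub]
  abel

/-- Quotient rule facts: differentiability and vanishing of the directional
derivative of `a / r` along a direction annihilating `a` and `r`. -/
lemma div_facts {p v : Fin 3 → ℝ} {a r : (Fin 3 → ℝ) → ℝ}
    (ha : DifferentiableAt ℝ a p) (hr : DifferentiableAt ℝ r p) (hrne : r p ≠ 0)
    (hav : fderiv ℝ a p v = 0) (hrv : fderiv ℝ r p v = 0) :
    DifferentiableAt ℝ (fun q => a q / r q) p ∧
      fderiv ℝ (fun q => a q / r q) p v = 0 := by
  have hinv : HasFDerivAt (fun q => (r q)⁻¹) ((-(r p ^ 2)⁻¹) • fderiv ℝ r p) p :=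
    (hasDerivAt_inv hrne).comp_hasFDerivAt p hr.hasFDerivAt
  have hmul : HasFDerivAt (fun q => a q * (r q)⁻¹)
      (a p • ((-(r p ^ 2)⁻¹) • fderiv ℝ r p) + (r p)⁻¹ • fderiv ℝ a p) p :=
    ha.hasFDerivAt.mul hinv
  have heq : (fun q => a q / r q) = fun q => a q * (r q)⁻¹ := by
    funext q; rw [div_eq_mul_inv]
  rw [heq]
  refine ⟨hmul.differentiableAt, ?_⟩
  rw [hmul.fderiv]
  simp [hav, hrv]

/-- Computational core of Lemma 5 of the paper: rotating the horizontal frame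
fields so that the second integrability datum becomes `0` and the first becomes
`√(k₁² + k₂²)`. -/
theorem stmt_5 (U : Set (Fin 3 → ℝ)) (hU : IsOpen U)
    (e₁ e₂ e₃ : (Fin 3 → ℝ) → (Fin 3 → ℝ)) (k₁ k₂ : (Fin 3 → ℝ) → ℝ)
    (he₁ : ContDiffOn ℝ (⊤ : ℕ∞) e₁ U) (he₂ : ContDiffOn ℝ (⊤ : ℕ∞) e₂ U) (he₃ : ContDiffOn ℝ (⊤ : ℕ∞) e₃ U)
    (hk₁ : ContDiffOn ℝ (⊤ : ℕ∞) k₁ U) (hk₂ : ContDiffOn ℝ (⊤ : ℕ∞) k₂ U)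
    (hb13 : ∀ p ∈ U, lieBracketVF e₁ e₃ p = k₁ p • e₃ p)
    (hb23 : ∀ p ∈ U, lieBracketVF e₂ e₃ p = k₂ p • e₃ p)
    (hk₁const : ∀ p ∈ U, dirDeriv e₃ k₁ p = 0)
    (hk₂const : ∀ p ∈ U, dirDeriv e₃ k₂ p = 0)
    (hpos : ∀ p ∈ U, 0 < k₁ p ^ 2 + k₂ p ^ 2)
    (r : (Fin 3 → ℝ) → ℝ) (hr : ∀ p, r p = Real.sqrt (k₁ p ^ 2 + k₂ p ^ 2))
    (e₁' e₂' : (Fin 3 → ℝ) → (Fin 3 → ℝ))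
    (he₁' : ∀ p, e₁' p = (k₁ p / r p) • e₁ p + (k₂ p / r p) • e₂ p)
    (he₂' : ∀ p, e₂' p = (-k₂ p / r p) • e₁ p + (k₁ p / r p) • e₂ p) :
    ∀ p ∈ U, lieBracketVF e₁' e₃ p = r p • e₃ p ∧ lieBracketVF e₂' e₃ p = 0 := by
  intro p hp
  have mem : U ∈ nhds p := hU.mem_nhds hp
  have hdk1 : DifferentiableAt ℝ k₁ p := (hk₁.contDiffAt mem).differentiableAt (by simp)
  have hdk2 : DifferentiableAt ℝ k₂ p := (hk₂.contDiffAt mem).differentiableAt (by simp)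
  have hde1 : DifferentiableAt ℝ e₁ p := (he₁.contDiffAt mem).differentiableAt (by simp)
  have hde2 : DifferentiableAt ℝ e₂ p := (he₂.contDiffAt mem).differentiableAt (by simp)
  have hk1v : fderiv ℝ k₁ p (e₃ p) = 0 := hk₁const p hp
  have hk2v : fderiv ℝ k₂ p (e₃ p) = 0 := hk₂const p hp
  -- the squared-norm function
  have hspos : 0 < k₁ p ^ 2 + k₂ p ^ 2 := hpos p hp
  have hrpos : 0 < r p := by rw [hr p]; exact Real.sqrt_pos.mpr hspos
  have hrne : r p ≠ 0 := ne_of_gt hrpos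
  have hrsq : r p ^ 2 = k₁ p ^ 2 + k₂ p ^ 2 := by
    rw [hr p]; exact Real.sq_sqrt hspos.le
  have hseq : (fun q => k₁ q ^ 2 + k₂ q ^ 2) = fun q => k₁ q * k₁ q + k₂ q * k₂ q := by
    funext q; ring
  have hs : HasFDerivAt (fun q => k₁ q ^ 2 + k₂ q ^ 2)
      ((k₁ p • fderiv ℝ k₁ p + k₁ p • fderiv ℝ k₁ p)
        + (k₂ p • fderiv ℝ k₂ p + k₂ p • fderiv ℝ k₂ p)) p := by
    rw [hseq]
    exact (hdk1.hasFDerivAt.mul hdk1.hasFDerivAt).add (hdk2.hasFDerivAt.mul hdk2.hasFDerivAt)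
  have hreq : r = Real.sqrt ∘ fun q => k₁ q ^ 2 + k₂ q ^ 2 := funext hr
  have hrd : HasFDerivAt r ((1 / (2 * Real.sqrt (k₁ p ^ 2 + k₂ p ^ 2))) •
      ((k₁ p • fderiv ℝ k₁ p + k₁ p • fderiv ℝ k₁ p)
        + (k₂ p • fderiv ℝ k₂ p + k₂ p • fderiv ℝ k₂ p))) p := by
    rw [hreq]
    exact (Real.hasDerivAt_sqrt hspos.ne').comp_hasFDerivAt p hs
  have hdr : DifferentiableAt ℝ r p := hrd.differentiableAt
  have hrv : fderiv ℝ r p (e₃ p) = 0 := by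
    rw [hrd.fderiv]; simp [hk1v, hk2v]
  -- coefficient functions
  obtain ⟨hda, hva⟩ := div_facts hdk1 hdr hrne hk1v hrv
  obtain ⟨hdb, hvb⟩ := div_facts hdk2 hdr hrne hk2v hrv
  obtain ⟨hdc, hvc⟩ := div_facts hdk2.neg hdr hrne
    (by rw [fderiv_neg]; simp [hk1v, hk2v]) hrv
  have hE1 : e₁' = fun q => (k₁ q / r q) • e₁ q + (k₂ q / r q) • e₂ q := funext he₁'
  have hE2 : e₂' = fun q => (-k₂ q / r q) • e₁ q + (k₁ q / r q) • e₂ q := funext he₂'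
  constructor
  · rw [hE1, bracket_comb hda hdb hde1 hde2 hva hvb, hb13 p hp, hb23 p hp,
      smul_smul, smul_smul, ← add_smul]
    congr 1
    field_simp
    nlinarith [hrsq]
  · have hvc' : fderiv ℝ (fun q => -k₂ q / r q) p (e₃ p) = 0 := hvc
    have hdc' : DifferentiableAt ℝ (fun q => -k₂ q / r q) p := hdc
    rw [hE2, bracket_comb hdc' hda hde1 hde2 hvc' hva, hb13 p hp, hb23 p hp,
      smul_smul, smul_smul, ← add_smul]
    have : -k₂ p / r p * k₁ p + k₁ p / r p * k₂ p = 0 := by field_simp; ring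
    rw [this, zero_smul]
end

section
/- Let U be an open subset of ℝⁿ, let X be a smooth vector field on U, let k, σ be smooth functions on U, and let c ∈ ℝ be a constant. Assume X(σ) = 2kσ, X(k) = σ² + k² + c, k(p) ≠ 0 for every p ∈ U, and k² = −3σ² − 3c identically on U. Then k² = −7σ² − c identically on U. -/
/-- Equation (17) of the paper, obtained by differentiating `k² = −3σ² − 3c`
along `X` and using the curvature equations `X(σ) = 2kσ`, `X(k) = σ² + k² + c`. -/
theorem stmt_7 (n : ℕ) (U : Set (Fin n → ℝ)) (hU : IsOpen U)
    (X : (Fin n → ℝ) → (Fin n → ℝ)) (k σ : (Fin n → ℝ) → ℝ) (c : ℝ)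
    (hX : ContDiffOn ℝ (⊤ : ℕ∞) X U) (hk : ContDiffOn ℝ (⊤ : ℕ∞) k U) (hσ : ContDiffOn ℝ (⊤ : ℕ∞) σ U)
    (ha1 : ∀ p ∈ U, dirDeriv X σ p = 2 * k p * σ p)
    (ha2 : ∀ p ∈ U, dirDeriv X k p = σ p ^ 2 + k p ^ 2 + c)
    (hk0 : ∀ p ∈ U, k p ≠ 0)
    (h16 : ∀ p ∈ U, k p ^ 2 = -3 * σ p ^ 2 - 3 * c) :
    ∀ p ∈ U, k p ^ 2 = -7 * σ p ^ 2 - c := by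
  intro p hp
  have hnp : U ∈ nhds p := hU.mem_nhds hp
  have hk' : DifferentiableAt ℝ k p :=
    ((hk.differentiableOn (by simp)) p hp).differentiableAt hnp
  have hσ' : DifferentiableAt ℝ σ p :=
    ((hσ.differentiableOn (by simp)) p hp).differentiableAt hnp
  set Dk := fderiv ℝ k p
  set Dσ := fderiv ℝ σ p
  have hfd : HasFDerivAt (fun q => k q * k q + 3 * (σ q * σ q))
      ((k p • Dk + k p • Dk) + (3 : ℝ) • (σ p • Dσ + σ p • Dσ)) p :=
    (hk'.hasFDerivAt.mul hk'.hasFDerivAt).add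
      ((hσ'.hasFDerivAt.mul hσ'.hasFDerivAt).const_mul 3)
  have heq : (fun q => k q * k q + 3 * (σ q * σ q)) =ᶠ[nhds p] fun _ => -3 * c := by
    filter_upwards [hnp] with q hq
    have := h16 q hq
    nlinarith [this]
  have hzero : HasFDerivAt (fun q => k q * k q + 3 * (σ q * σ q)) (0 : (Fin n → ℝ) →L[ℝ] ℝ) p := by
    have : HasFDerivAt (fun _ : Fin n → ℝ => -3 * c) (0 : (Fin n → ℝ) →L[ℝ] ℝ) p :=
      hasFDerivAt_const _ _
    exact this.congr_of_eventuallyEq heq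
  have hD : (k p • Dk + k p • Dk) + (3 : ℝ) • (σ p • Dσ + σ p • Dσ) = 0 :=
    hfd.unique hzero
  have hap : ((k p • Dk + k p • Dk) + (3 : ℝ) • (σ p • Dσ + σ p • Dσ)) (X p) = 0 := by
    rw [hD]; rfl
  simp only [ContinuousLinearMap.add_apply, ContinuousLinearMap.smul_apply,
    smul_eq_mul] at hap
  have h1 : Dk (X p) = σ p ^ 2 + k p ^ 2 + c := ha2 p hp
  have h2 : Dσ (X p) = 2 * k p * σ p := ha1 p hp
  rw [h1, h2] at hap
  have hk0' := hk0 p hp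
  have h3 : k p * (2 * σ p ^ 2 + 2 * k p ^ 2 + 2 * c + 12 * σ p ^ 2) = k p * 0 := by
    linear_combination hap
  have h4 := mul_left_cancel₀ hk0' h3
  linarith
end

section
/- Let U be an open subset of ℝⁿ, let X be a smooth vector field on U, let k, σ be smooth functions on U, and let c ∈ ℝ be a constant. Assume X(σ) = 2kσ, X(k) = σ² + k² + c, k(p) ≠ 0 for every p ∈ U, and k² = −7σ² − c identically on U. Then k² = −15σ² − c identically on U. -/
/-- Equation (18) of the paper, obtained by differentiating `k² = −7σ² − c`
along `X` and using the curvature equations `X(σ) = 2kσ`, `X(k) = σ² + k² + c`. -/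
theorem stmt_8 (n : ℕ) (U : Set (Fin n → ℝ)) (hU : IsOpen U)
    (X : (Fin n → ℝ) → (Fin n → ℝ)) (k σ : (Fin n → ℝ) → ℝ) (c : ℝ)
    (hX : ContDiffOn ℝ (⊤ : ℕ∞) X U) (hk : ContDiffOn ℝ (⊤ : ℕ∞) k U) (hσ : ContDiffOn ℝ (⊤ : ℕ∞) σ U)
    (ha1 : ∀ p ∈ U, dirDeriv X σ p = 2 * k p * σ p)
    (ha2 : ∀ p ∈ U, dirDeriv X k p = σ p ^ 2 + k p ^ 2 + c)
    (hk0 : ∀ p ∈ U, k p ≠ 0)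
    (h17 : ∀ p ∈ U, k p ^ 2 = -7 * σ p ^ 2 - c) :
    ∀ p ∈ U, k p ^ 2 = -15 * σ p ^ 2 - c := by
  intro p hp
  have hnhds : U ∈ nhds p := hU.mem_nhds hp
  have hdk : DifferentiableAt ℝ k p :=
    ((hk.contDiffAt hnhds).differentiableAt (by simp))
  have hdσ : DifferentiableAt ℝ σ p :=
    ((hσ.contDiffAt hnhds).differentiableAt (by simp))
  -- f = k·k + 7·σ·σ is locally constant equal to -c
  have hfd : HasFDerivAt (fun q => k q * k q + 7 * (σ q * σ q))
      ((k p • fderiv ℝ k p + k p • fderiv ℝ k p) +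
        (7 : ℝ) • (σ p • fderiv ℝ σ p + σ p • fderiv ℝ σ p)) p :=
    (hdk.hasFDerivAt.mul hdk.hasFDerivAt).add
      ((hdσ.hasFDerivAt.mul hdσ.hasFDerivAt).const_mul 7)
  have heq : (fun q => k q * k q + 7 * (σ q * σ q)) =ᶠ[nhds p] fun _ => -c := by
    filter_upwards [hnhds] with q hq
    have := h17 q hq
    nlinarith [this]
  have hzero : HasFDerivAt (fun q => k q * k q + 7 * (σ q * σ q))
      (0 : (Fin n → ℝ) →L[ℝ] ℝ) p :=
    (hasFDerivAt_const (-c) p).congr_of_eventuallyEq heq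
  have hder := hfd.unique hzero
  have h0 : (2 * k p) * fderiv ℝ k p (X p) + 7 * ((2 * σ p) * fderiv ℝ σ p (X p)) = 0 := by
    have := congrArg (fun L => L (X p)) hder
    simp only [ContinuousLinearMap.add_apply, ContinuousLinearMap.smul_apply,
      ContinuousLinearMap.zero_apply, smul_eq_mul] at this
    linarith
  have h1 := ha1 p hp
  have h2 := ha2 p hp
  simp only [dirDeriv] at h1 h2
  rw [h1, h2] at h0
  have hk' := hk0 p hp
  have : σ p ^ 2 + k p ^ 2 + c = -14 * σ p ^ 2 := by
    have h0' : k p * (σ p ^ 2 + k p ^ 2 + c + 14 * σ p ^ 2) = 0 := by ring_nf; ring_nf at h0; linarith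
    rcases mul_eq_zero.mp h0' with h | h
    · exact absurd h hk'
    · linarith
  linarith
end

section
/- Let U be a nonempty open subset of ℝⁿ. There do not exist a smooth vector field X on U, smooth functions k, σ on U, and a constant c ∈ ℝ such that X(σ) = 2kσ, X(k) = σ² + k² + c, k² = −3σ² − 3c identically on U, and k(p) ≠ 0 for every p ∈ U. -/
private lemma eval_zero_of_vanishes {n : ℕ} {U : Set (Fin n → ℝ)} (hU : IsOpen U)
    {F : (Fin n → ℝ) → ℝ} {D : (Fin n → ℝ) →L[ℝ] ℝ} {p : Fin n → ℝ} (hp : p ∈ U)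
    (hF : HasFDerivAt F D p) (h0 : ∀ q ∈ U, F q = 0) (v : Fin n → ℝ) : D v = 0 := by
  have hev : F =ᶠ[nhds p] (fun _ => (0 : ℝ)) :=
    Filter.eventuallyEq_of_mem (hU.mem_nhds hp) h0
  have h0' : HasFDerivAt F (0 : (Fin n → ℝ) →L[ℝ] ℝ) p :=
    (hasFDerivAt_const (0 : ℝ) p).congr_of_eventuallyEq hev
  have := hF.unique h0'
  simp [this]

/-- Case II in the proof of Theorem 7 of the paper: the curvature equations of a
Lorentzian space form together with `k² = −3σ² − 3c` are incompatible with `k`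
being nowhere zero. -/
theorem stmt_9 (n : ℕ) (U : Set (Fin n → ℝ)) (hU : IsOpen U) (hne : U.Nonempty) :
    ¬ ∃ (X : (Fin n → ℝ) → (Fin n → ℝ)) (k σ : (Fin n → ℝ) → ℝ) (c : ℝ),
      ContDiffOn ℝ (⊤ : ℕ∞) X U ∧ ContDiffOn ℝ (⊤ : ℕ∞) k U ∧ ContDiffOn ℝ (⊤ : ℕ∞) σ U ∧
      (∀ p ∈ U, dirDeriv X σ p = 2 * k p * σ p) ∧
      (∀ p ∈ U, dirDeriv X k p = σ p ^ 2 + k p ^ 2 + c) ∧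
      (∀ p ∈ U, k p ^ 2 = -3 * σ p ^ 2 - 3 * c) ∧
      (∀ p ∈ U, k p ≠ 0) := by
  rintro ⟨X, k, σ, c, -, hk, hσ, eσ, ek, e3, hknz⟩
  -- differentiability at points of U
  have hkd : ∀ p ∈ U, HasFDerivAt k (fderiv ℝ k p) p := fun p hp =>
    (((hk.contDiffAt (hU.mem_nhds hp)).differentiableAt (by simp)).hasFDerivAt)
  have hσd : ∀ p ∈ U, HasFDerivAt σ (fderiv ℝ σ p) p := fun p hp =>
    (((hσ.contDiffAt (hU.mem_nhds hp)).differentiableAt (by simp)).hasFDerivAt)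
  -- Step 1: σ² = c/2 on U
  have hstep1 : ∀ p ∈ U, σ p ^ 2 = c / 2 := by
    intro p hp
    have hK := hkd p hp
    have hS := hσd p hp
    have hK2 : HasFDerivAt (fun q => k q ^ 2) ((2 * k p) • fderiv ℝ k p) p := by
      have := hK.mul hK
      simpa [pow_two, two_smul, two_mul, add_smul, Pi.mul_def] using this
    have hS2 : HasFDerivAt (fun q => σ q ^ 2) ((2 * σ p) • fderiv ℝ σ p) p := by
      have := hS.mul hS
      simpa [pow_two, two_smul, two_mul, add_smul, Pi.mul_def] using this
    have h1 : HasFDerivAt (fun q => k q ^ 2 + 3 * σ q ^ 2 + 3 * c)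
        ((2 * k p) • fderiv ℝ k p +
          ((3 : ℝ) • ((2 * σ p) • fderiv ℝ σ p) + 0)) p := by
      simpa [add_assoc, Pi.add_def] using hK2.add ((hS2.const_mul 3).add (hasFDerivAt_const (3 * c) p))
    have hvan : ∀ q ∈ U, k q ^ 2 + 3 * σ q ^ 2 + 3 * c = 0 := by
      intro q hq; have := e3 q hq; linarith
    have h0 := eval_zero_of_vanishes hU hp h1 hvan (X p)
    simp only [ContinuousLinearMap.add_apply, ContinuousLinearMap.smul_apply,
      ContinuousLinearMap.zero_apply, smul_eq_mul] at h0
    have hdk : fderiv ℝ k p (X p) = σ p ^ 2 + k p ^ 2 + c := ek p hp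
    have hdσ : fderiv ℝ σ p (X p) = 2 * k p * σ p := eσ p hp
    rw [hdk, hdσ] at h0
    have hk3 := e3 p hp
    have hkne := hknz p hp
    -- h0 : 2 * k p ^1 * (σ²+k²+c) + (3*(2*σ p^1*(2kσ)) + 0) = 0
    have hfac : k p * (2 * (σ p ^ 2 + k p ^ 2 + c) + 12 * σ p ^ 2) = 0 := by
      ring_nf at h0 ⊢; nlinarith [h0]
    have := mul_eq_zero.mp hfac
    rcases this with h | h
    · exact absurd h hkne
    · nlinarith [hk3]
  -- Step 2: differentiate σ² - c/2 = 0
  obtain ⟨p, hp⟩ := hne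
  have hS := hσd p hp
  have hS2 : HasFDerivAt (fun q => σ q ^ 2) ((2 * σ p) • fderiv ℝ σ p) p := by
    have := hS.mul hS
    simpa [pow_two, two_smul, two_mul, add_smul, Pi.mul_def] using this
  have h2 : HasFDerivAt (fun q => σ q ^ 2 - c / 2)
      ((2 * σ p) • fderiv ℝ σ p - 0) p :=
    hS2.sub (hasFDerivAt_const (c / 2) p)
  have hvan2 : ∀ q ∈ U, σ q ^ 2 - c / 2 = 0 := by
    intro q hq; have := hstep1 q hq; linarith
  have h0 := eval_zero_of_vanishes hU hp h2 hvan2 (X p)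
  simp only [ContinuousLinearMap.sub_apply, ContinuousLinearMap.smul_apply,
    ContinuousLinearMap.zero_apply, smul_eq_mul] at h0
  have hdσ : fderiv ℝ σ p (X p) = 2 * k p * σ p := eσ p hp
  rw [hdσ] at h0
  have hkne := hknz p hp
  have hσ0 : σ p = 0 := by
    have : σ p ^ 2 * k p = 0 := by nlinarith [h0]
    rcases mul_eq_zero.mp this with h | h
    · exact pow_eq_zero_iff (n := 2) (by norm_num) |>.mp h
    · exact absurd h hkne
  have hc : c = 0 := by have := hstep1 p hp; rw [hσ0] at this; linarith [this]
  have := e3 p hp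
  rw [hσ0, hc] at this
  have : k p = 0 := by nlinarith [this]
  exact hknz p hp this
end

section
/- Let U be an open subset of ℝⁿ, let X be a smooth vector field on U, let k, σ, f be smooth functions on U, and let c ∈ ℝ be a constant. Assume X(σ) = 2kσ, X(k) = σ² + k² + c, −σ² − k·f = c, and −X(X(k)) + f·X(k) + k·X(k) + k·(−c + 3σ² + f²) = 0 identically on U. Then k·(3σ² + k² + 3c) = 0 identically on U. -/
/-- Equation (15) of the paper: the curvature equations `a₁)`, `a₂)`, `a₇)`
together with the biharmonic equation (144) imply `k(3σ² + k² + 3c) = 0`. -/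
theorem stmt_10 (n : ℕ) (U : Set (Fin n → ℝ)) (hU : IsOpen U)
    (X : (Fin n → ℝ) → (Fin n → ℝ)) (k σ f : (Fin n → ℝ) → ℝ) (c : ℝ)
    (hX : ContDiffOn ℝ (⊤ : ℕ∞) X U) (hk : ContDiffOn ℝ (⊤ : ℕ∞) k U)
    (hσ : ContDiffOn ℝ (⊤ : ℕ∞) σ U) (hf : ContDiffOn ℝ (⊤ : ℕ∞) f U)
    (ha1 : ∀ p ∈ U, dirDeriv X σ p = 2 * k p * σ p)
    (ha2 : ∀ p ∈ U, dirDeriv X k p = σ p ^ 2 + k p ^ 2 + c)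
    (ha7 : ∀ p ∈ U, -σ p ^ 2 - k p * f p = c)
    (hbih : ∀ p ∈ U, -dirDeriv X (dirDeriv X k) p + f p * dirDeriv X k p
      + k p * dirDeriv X k p + k p * (-c + 3 * σ p ^ 2 + f p ^ 2) = 0) :
    ∀ p ∈ U, k p * (3 * σ p ^ 2 + k p ^ 2 + 3 * c) = 0 := by
  intro p hp
  have hmem : U ∈ nhds p := hU.mem_nhds hp
  have hσd : DifferentiableAt ℝ σ p := (hσ.contDiffAt hmem).differentiableAt (by simp)
  have hkd : DifferentiableAt ℝ k p := (hk.contDiffAt hmem).differentiableAt (by simp)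
  have hEq : dirDeriv X k =ᶠ[nhds p] (fun q => σ q ^ 2 + k q ^ 2 + c) :=
    Filter.eventually_of_mem hmem (fun q hq => ha2 q hq)
  have hF : HasFDerivAt (fun q => σ q ^ 2 + k q ^ 2 + c)
      ((σ p • fderiv ℝ σ p + σ p • fderiv ℝ σ p)
        + (k p • fderiv ℝ k p + k p • fderiv ℝ k p)) p := by
    simp only [pow_two]
    exact ((hσd.hasFDerivAt.mul hσd.hasFDerivAt).add
      (hkd.hasFDerivAt.mul hkd.hasFDerivAt)).add_const c
  have hXXk : dirDeriv X (dirDeriv X k) p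
      = 2 * σ p * dirDeriv X σ p + 2 * k p * dirDeriv X k p := by
    show fderiv ℝ (dirDeriv X k) p (X p) = _
    rw [hEq.fderiv_eq, hF.fderiv]
    simp only [ContinuousLinearMap.add_apply, ContinuousLinearMap.smul_apply,
      smul_eq_mul, dirDeriv]
    ring
  have hb := hbih p hp
  rw [hXXk, ha1 p hp, ha2 p hp] at hb
  linear_combination -hb - (f p + k p) * ha7 p hp
end

section
/- Let U be a nonempty open subset of ℝ³, let e₁, e₂, e₃ be smooth vector fields on U, let f₁, f₂, k₁, σ be smooth functions on U, and let c ∈ ℝ be a constant. Assume: e₁(σ) = 2k₁σ; e₁(k₁) = σ² + k₁² + c; k₁·f₁ = 0; e₂(f₁) − e₁(f₂) + f₁² + f₂² − 3σ² = −c; e₂(σ) = 0; e₂(k₁) = 0; −σ² − k₁·f₂ = c; e₃(σ) = 0 and e₃(k₁) = 0; and the biharmonic equation −[e₁(e₁(k₁)) + e₂(e₂(k₁)) − e₃(e₃(k₁)) + f₁·e₂(k₁) − f₂·e₁(k₁) − k₁·e₁(k₁)] + k₁·(f₁² + f₂² − c + 3σ²) = 0 holds identically on U. Then k₁ = 0 identically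 on U. -/
/-- If two functions agree on an open set, their directional derivatives agree there. -/
lemma dirDeriv_congrOn {n : ℕ} {U : Set (Fin n → ℝ)} (hU : IsOpen U)
    {g h : (Fin n → ℝ) → ℝ} (hgh : ∀ x ∈ U, g x = h x)
    (X : (Fin n → ℝ) → (Fin n → ℝ)) {q : Fin n → ℝ} (hq : q ∈ U) :
    dirDeriv X g q = dirDeriv X h q := by
  unfold dirDeriv
  rw [Filter.EventuallyEq.fderiv_eq (Filter.eventuallyEq_of_mem (hU.mem_nhds hq) hgh)]

/-- Frame-level content of Theorem 7 of the paper: the curvature equations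
`a₁)`–`a₇)` of (13) together with the biharmonic equation force `k₁ = 0`,
i.e. a biharmonic semi-Riemannian submersion from a Lorentzian space form
`M₁³(c)` onto a surface is harmonic. -/
theorem stmt_11 (U : Set (Fin 3 → ℝ)) (hU : IsOpen U) (hne : U.Nonempty)
    (e₁ e₂ e₃ : (Fin 3 → ℝ) → (Fin 3 → ℝ))
    (f₁ f₂ k₁ σ : (Fin 3 → ℝ) → ℝ) (c : ℝ)
    (he₁ : ContDiffOn ℝ (⊤ : ℕ∞) e₁ U) (he₂ : ContDiffOn ℝ (⊤ : ℕ∞) e₂ U) (he₃ : ContDiffOn ℝ (⊤ : ℕ∞) e₃ U)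
    (hf₁ : ContDiffOn ℝ (⊤ : ℕ∞) f₁ U) (hf₂ : ContDiffOn ℝ (⊤ : ℕ∞) f₂ U)
    (hk₁ : ContDiffOn ℝ (⊤ : ℕ∞) k₁ U) (hσ : ContDiffOn ℝ (⊤ : ℕ∞) σ U)
    (ha1 : ∀ p ∈ U, dirDeriv e₁ σ p = 2 * k₁ p * σ p)
    (ha2 : ∀ p ∈ U, dirDeriv e₁ k₁ p = σ p ^ 2 + k₁ p ^ 2 + c)
    (ha3 : ∀ p ∈ U, k₁ p * f₁ p = 0)
    (ha4 : ∀ p ∈ U, dirDeriv e₂ f₁ p - dirDeriv e₁ f₂ p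
      + f₁ p ^ 2 + f₂ p ^ 2 - 3 * σ p ^ 2 = -c)
    (ha5 : ∀ p ∈ U, dirDeriv e₂ σ p = 0)
    (ha6 : ∀ p ∈ U, dirDeriv e₂ k₁ p = 0)
    (ha7 : ∀ p ∈ U, -σ p ^ 2 - k₁ p * f₂ p = c)
    (hσ3 : ∀ p ∈ U, dirDeriv e₃ σ p = 0)
    (hk₁3 : ∀ p ∈ U, dirDeriv e₃ k₁ p = 0)
    (hbih : ∀ p ∈ U,
      -(dirDeriv e₁ (dirDeriv e₁ k₁) p + dirDeriv e₂ (dirDeriv e₂ k₁) p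
        - dirDeriv e₃ (dirDeriv e₃ k₁) p + f₁ p * dirDeriv e₂ k₁ p
        - f₂ p * dirDeriv e₁ k₁ p - k₁ p * dirDeriv e₁ k₁ p)
      + k₁ p * (f₁ p ^ 2 + f₂ p ^ 2 - c + 3 * σ p ^ 2) = 0) :
    ∀ p ∈ U, k₁ p = 0 := by
  have hkd : ∀ q ∈ U, DifferentiableAt ℝ k₁ q := fun q hq =>
    (hk₁.differentiableOn (by simp)).differentiableAt (hU.mem_nhds hq)
  have hσd : ∀ q ∈ U, DifferentiableAt ℝ σ q := fun q hq =>
    (hσ.differentiableOn (by simp)).differentiableAt (hU.mem_nhds hq)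
  -- second derivatives of k₁ along e₂ and e₃ vanish on U
  have h22 : ∀ q ∈ U, dirDeriv e₂ (dirDeriv e₂ k₁) q = 0 := by
    intro q hq
    rw [dirDeriv_congrOn hU ha6 e₂ hq]
    simp [dirDeriv]
  have h33 : ∀ q ∈ U, dirDeriv e₃ (dirDeriv e₃ k₁) q = 0 := by
    intro q hq
    rw [dirDeriv_congrOn hU hk₁3 e₃ hq]
    simp [dirDeriv]
  -- the second derivative of k₁ along e₁ on U
  have h11 : ∀ q ∈ U, dirDeriv e₁ (dirDeriv e₁ k₁) q
      = 6 * k₁ q * σ q ^ 2 + 2 * k₁ q ^ 3 + 2 * c * k₁ q := by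
    intro q hq
    rw [dirDeriv_congrOn hU ha2 e₁ hq]
    have hg : HasFDerivAt (fun x => σ x ^ 2 + k₁ x ^ 2 + c)
        ((σ q • fderiv ℝ σ q + σ q • fderiv ℝ σ q) +
         (k₁ q • fderiv ℝ k₁ q + k₁ q • fderiv ℝ k₁ q)) q := by
      simpa [pow_two] using
        (((hσd q hq).hasFDerivAt.mul (hσd q hq).hasFDerivAt).add
          ((hkd q hq).hasFDerivAt.mul (hkd q hq).hasFDerivAt)).add_const c
    have h1 := ha1 q hq
    have h2 := ha2 q hq
    unfold dirDeriv at h1 h2 ⊢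
    rw [hg.fderiv]
    simp only [ContinuousLinearMap.add_apply, ContinuousLinearMap.smul_apply, smul_eq_mul]
    rw [h1, h2]
    ring
  -- the key algebraic identity on U, obtained from the biharmonic equation
  have hF : ∀ q ∈ U, k₁ q ^ 2 * (k₁ q ^ 2 + 3 * σ q ^ 2 + 3 * c) = 0 := by
    intro q hq
    have hb := hbih q hq
    rw [h11 q hq, h22 q hq, h33 q hq, ha6 q hq, ha2 q hq] at hb
    have h3 := ha3 q hq
    have h7 := ha7 q hq
    linear_combination (-(k₁ q)) * hb + (k₁ q * f₁ q) * h3 +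
      (-(k₁ q ^ 2) - k₁ q * f₂ q) * h7
  intro p hp
  by_contra hk0
  have hkp2 : 0 < k₁ p ^ 2 := by positivity
  -- from `hF` at `p` and `k₁ p ≠ 0`:
  have eq1 : k₁ p ^ 2 + 3 * σ p ^ 2 + 3 * c = 0 := by
    rcases mul_eq_zero.mp (hF p hp) with h | h
    · exact absurd h (pow_ne_zero 2 hk0)
    · exact h
  -- the derivative of the identity `hF` along `e₁` at `p`
  have hdF : dirDeriv e₁ (fun x => k₁ x ^ 2 * (k₁ x ^ 2 + 3 * σ x ^ 2 + 3 * c)) p = 0 := by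
    rw [dirDeriv_congrOn hU (h := fun _ => (0 : ℝ)) hF e₁ hp]
    simp [dirDeriv]
  -- compute that derivative explicitly
  have hA : HasFDerivAt (fun x => k₁ x * k₁ x)
      (k₁ p • fderiv ℝ k₁ p + k₁ p • fderiv ℝ k₁ p) p :=
    (hkd p hp).hasFDerivAt.mul (hkd p hp).hasFDerivAt
  have hS : HasFDerivAt (fun x => (3 : ℝ) * (σ x * σ x))
      ((3 : ℝ) • (σ p • fderiv ℝ σ p + σ p • fderiv ℝ σ p)) p :=
    ((hσd p hp).hasFDerivAt.mul (hσd p hp).hasFDerivAt).const_mul 3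
  have hB : HasFDerivAt (fun x => k₁ x * k₁ x + 3 * (σ x * σ x) + 3 * c)
      ((k₁ p • fderiv ℝ k₁ p + k₁ p • fderiv ℝ k₁ p) +
        (3 : ℝ) • (σ p • fderiv ℝ σ p + σ p • fderiv ℝ σ p)) p :=
    (hA.add hS).add_const (3 * c)
  have hProd : HasFDerivAt (fun x => (k₁ x * k₁ x) * (k₁ x * k₁ x + 3 * (σ x * σ x) + 3 * c)) _ p :=
    hA.mul hB
  have hdF' : dirDeriv e₁ (fun x => k₁ x ^ 2 * (k₁ x ^ 2 + 3 * σ x ^ 2 + 3 * c)) p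
      = (fderiv ℝ (fun x => (k₁ x * k₁ x) * (k₁ x * k₁ x + 3 * (σ x * σ x) + 3 * c)) p)
          (e₁ p) := by
    unfold dirDeriv
    congr 1
    apply Filter.EventuallyEq.fderiv_eq
    exact Filter.Eventually.of_forall fun x => by ring
  have h1 := ha1 p hp
  have h2 := ha2 p hp
  unfold dirDeriv at h1 h2
  rw [hdF', hProd.fderiv] at hdF
  simp only [ContinuousLinearMap.add_apply, ContinuousLinearMap.smul_apply,
    smul_eq_mul] at hdF
  rw [h1, h2] at hdF
  -- eliminate the `eq1` part of the derivative identity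
  have hcube : k₁ p ^ 3 * (14 * σ p ^ 2 + 2 * k₁ p ^ 2 + 2 * c) = 0 := by
    linear_combination hdF - (2 * k₁ p * (σ p ^ 2 + k₁ p ^ 2 + c)) * eq1
  have eq2 : 14 * σ p ^ 2 + 2 * k₁ p ^ 2 + 2 * c = 0 := by
    rcases mul_eq_zero.mp hcube with h | h
    · exact absurd h (pow_ne_zero 3 hk0)
    · exact h
  nlinarith [sq_nonneg (σ p), hkp2, eq1, eq2]
end

section
/- Let c ∈ ℝ with c ≠ 0 and define φ : (0,∞) → ℝ by φ(x) = c(1 + e^{cx})/(1 − e^{cx}). Then φ is smooth on (0,∞), φ(x) ≠ 0 for every x > 0, and φ'' = φ·φ' on (0,∞). -/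
/-- Analytic content of Example 1 of the paper: for `c ≠ 0`, the function
`φ(x) = c(1 + e^{cx})/(1 − e^{cx})` is smooth and nowhere zero on `(0,∞)`
and satisfies `φ'' = φ·φ'` there. -/
theorem stmt_12 (c : ℝ) (hc : c ≠ 0)
    (φ : ℝ → ℝ)
    (hφ : ∀ x, φ x = c * (1 + Real.exp (c * x)) / (1 - Real.exp (c * x))) :
    ContDiffOn ℝ (⊤ : ℕ∞) φ (Set.Ioi 0) ∧ (∀ x ∈ Set.Ioi (0 : ℝ), φ x ≠ 0) ∧
      ∀ x ∈ Set.Ioi (0 : ℝ), deriv (deriv φ) x = φ x * deriv φ x := by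
  have hφ' : φ = fun x => c * (1 + Real.exp (c * x)) / (1 - Real.exp (c * x)) :=
    funext hφ
  subst hφ'
  have hne : ∀ x : ℝ, x ≠ 0 → 1 - Real.exp (c * x) ≠ 0 := by
    intro x hx
    have : Real.exp (c * x) ≠ 1 := by
      rw [Ne, Real.exp_eq_one_iff]
      exact mul_ne_zero hc hx
    exact sub_ne_zero.mpr (Ne.symm this)
  -- first derivative
  set ψ : ℝ → ℝ := fun x => 2 * c ^ 2 * Real.exp (c * x) / (1 - Real.exp (c * x)) ^ 2 with hψ
  have hder : ∀ x : ℝ, x ≠ 0 →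
      HasDerivAt (fun x => c * (1 + Real.exp (c * x)) / (1 - Real.exp (c * x))) (ψ x) x := by
    intro x hx
    have he : HasDerivAt (fun x : ℝ => Real.exp (c * x)) (c * Real.exp (c * x)) x := by
      simpa [mul_comm, Function.comp_def] using (Real.hasDerivAt_exp (c * x)).comp x
        ((hasDerivAt_id x).const_mul c)
    have hnum : HasDerivAt (fun x : ℝ => c * (1 + Real.exp (c * x)))
        (c * (c * Real.exp (c * x))) x := by
      simpa using ((hasDerivAt_const x (1:ℝ)).add he).const_mul c
    have hden : HasDerivAt (fun x : ℝ => 1 - Real.exp (c * x)) (-(c * Real.exp (c * x))) x := by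
      simpa [Pi.sub_def] using (hasDerivAt_const x (1:ℝ)).sub he
    have := hnum.div hden (hne x hx)
    replace this : HasDerivAt (fun y : ℝ => c * (1 + Real.exp (c * y)) / (1 - Real.exp (c * y))) _ x := this
    convert this using 1
    have h := hne x hx
    simp only [hψ]
    field_simp [hψ]
    ring
  have hderψ : ∀ x : ℝ, x ≠ 0 →
      HasDerivAt ψ (2 * c ^ 3 * Real.exp (c * x) * (1 + Real.exp (c * x))
        / (1 - Real.exp (c * x)) ^ 3) x := by
    intro x hx
    have he : HasDerivAt (fun x : ℝ => Real.exp (c * x)) (c * Real.exp (c * x)) x := by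
      simpa [mul_comm, Function.comp_def] using (Real.hasDerivAt_exp (c * x)).comp x
        ((hasDerivAt_id x).const_mul c)
    have hnum : HasDerivAt (fun x : ℝ => 2 * c ^ 2 * Real.exp (c * x))
        (2 * c ^ 2 * (c * Real.exp (c * x))) x := he.const_mul _
    have hden : HasDerivAt (fun x : ℝ => (1 - Real.exp (c * x)) ^ 2)
        (2 * (1 - Real.exp (c * x)) * (-(c * Real.exp (c * x)))) x := by
      have h1 : HasDerivAt (fun x : ℝ => 1 - Real.exp (c * x)) (-(c * Real.exp (c * x))) x := by
        simpa [Pi.sub_def] using (hasDerivAt_const x (1:ℝ)).sub he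
      simpa [pow_two, mul_comm, mul_assoc, mul_left_comm, Pi.mul_def] using
        (h1.pow 2)
    have hd2 : ((1 : ℝ) - Real.exp (c * x)) ^ 2 ≠ 0 := pow_ne_zero _ (hne x hx)
    have := hnum.div hden hd2
    replace this : HasDerivAt ψ _ x := this
    convert this using 1
    have h := hne x hx
    field_simp [hψ]
    ring
  refine ⟨?_, ?_, ?_⟩
  · apply ContDiffOn.div
    · exact (contDiff_const.mul ((contDiff_const.add
        ((contDiff_const.mul contDiff_id).exp)))).contDiffOn
    · exact (contDiff_const.sub ((contDiff_const.mul contDiff_id).exp)).contDiffOn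
    · intro x hx
      exact hne x (ne_of_gt hx)
  · intro x hx
    have hx0 : x ≠ 0 := ne_of_gt hx
    apply div_ne_zero
    · exact mul_ne_zero hc (by positivity)
    · exact hne x hx0
  · intro x hx
    have hx0 : x ≠ 0 := ne_of_gt hx
    have hopen : {y : ℝ | y ≠ 0} ∈ nhds x := by
      exact IsOpen.mem_nhds isOpen_ne hx0
    have heq : deriv (fun x => c * (1 + Real.exp (c * x)) / (1 - Real.exp (c * x))) =ᶠ[nhds x] ψ := by
      filter_upwards [hopen] with y hy
      exact (hder y hy).deriv
    rw [heq.deriv_eq, (hderψ x hx0).deriv, (hder x hx0).deriv]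
    have h := hne x hx0
    simp only [hψ]
    field_simp
end
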